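/- Let N > n. There is a constant C = C(N) > 0 such that for every g ∈ L¹_loc(ℝⁿ), every J ∈ ℤ, v ∈ ℤⁿ, every integer k ≥ J, and every x in the dyadic cube Q_{J,v}, one has ∫_{ℝⁿ} 2^{kn}|g(y)| (1 + 2^k|x−y|)^{−N} dy ≤ C Σ_{w∈ℤⁿ} (1 + |v−w|)^{−(N−n)} · M(𝟙_{Q_{J,w}} · g)(x), where M is the Hardy–Littlewood maximal operator. -/

import Mathlib

/-!
Up to the null grid hyperplanes, `ℝⁿ` is the disjoint union of the cubes `Q_{J,w}`, so it
suffices to bound the integral against `h = 𝟙_{Q_{J,w}} g` for each `w`. Cut space into the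
shells `a 2^j ≤ 1 + 2^k |x - y| < a 2^{j+1}`: there the kernel is at most `2^{kn} (a 2^j)^{-N}`
and the shell lies in the ball of radius `a 2^{j+1-k}` about `x`, so it contributes at most
`2ⁿ a^{-(N-n)} 2^{-j(N-n)} |B(0,1)| M h(x)`, a geometric series in `j`. Since `Q_{J,w}` stays
at distance `≥ 2^{-J} (|v - w| - √n)` from `x` and `2^{k-J} ≥ 1`, `h` vanishes below the level
`a = max 1 (1 + |v - w| - √n)`, and `a^{-(N-n)} ≤ (1 + √n)^{N-n} (1 + |v - w|)^{-(N-n)}`.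
-/

open MeasureTheory
open scoped ENNReal

/-- The open dyadic cube `Q_{J,v} = 2^{−J}v + (0, 2^{−J})ⁿ`. -/
def dyadicCube (n : ℕ) (J : ℤ) (v : Fin n → ℤ) : Set (EuclideanSpace ℝ (Fin n)) :=
  {x | ∀ i, (2 : ℝ) ^ (-J) * (v i : ℝ) < x i ∧ x i < (2 : ℝ) ^ (-J) * ((v i : ℝ) + 1)}

/-- An integer vector viewed as a point of Euclidean space. -/
noncomputable def intVec (n : ℕ) (v : Fin n → ℤ) : EuclideanSpace ℝ (Fin n) :=
  WithLp.toLp 2 (fun i => (v i : ℝ))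

/-- The Hardy–Littlewood maximal function
`M g (x) = sup_{R>0} |B(0,R)|⁻¹ ∫_{B(x,R)} g`. -/
noncomputable def HLmax {n : ℕ} (g : EuclideanSpace ℝ (Fin n) → ℝ≥0∞)
    (x : EuclideanSpace ℝ (Fin n)) : ℝ≥0∞ :=
  ⨆ R : Set.Ioi (0 : ℝ), (volume (Metric.ball x (R : ℝ)))⁻¹ * ∫⁻ y in Metric.ball x (R : ℝ), g y

open Metric

lemma setLIntegral_ball_le_volume_mul_HLmax {n : ℕ} (h : EuclideanSpace ℝ (Fin n) → ℝ≥0∞)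
    (x : EuclideanSpace ℝ (Fin n)) {R : ℝ} (hR : 0 < R) :
    ∫⁻ y in ball x R, h y ≤ volume (ball x R) * HLmax h x :=
  (ENNReal.inv_mul_le_iff (measure_ball_pos volume x hR).ne' measure_ball_lt_top.ne).1 <|
    le_iSup (fun R : Set.Ioi (0 : ℝ) =>
      (volume (ball x (R : ℝ)))⁻¹ * ∫⁻ y in ball x (R : ℝ), h y) ⟨R, hR⟩

lemma EuclideanSpace.norm_le_sqrt_card_mul {ι : Type*} [Fintype ι] {z : EuclideanSpace ℝ ι}
    {c : ℝ} (hc : 0 ≤ c) (hz : ∀ i, |z i| ≤ c) : ‖z‖ ≤ √(Fintype.card ι) * c := by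
  calc ‖z‖ = √(∑ i, ‖z i‖ ^ 2) := EuclideanSpace.norm_eq z
    _ ≤ √(∑ _i : ι, c ^ 2) := by
        gcongr with i
        exact (Real.norm_eq_abs _).trans_le (hz i)
    _ = √(Fintype.card ι) * c := by
        rw [Finset.sum_const, Finset.card_univ, nsmul_eq_mul, Real.sqrt_mul (Nat.cast_nonneg _),
          Real.sqrt_sq hc]

lemma le_norm_sub_of_mem_dyadicCube {n : ℕ} {J : ℤ} {v w : Fin n → ℤ}
    {x y : EuclideanSpace ℝ (Fin n)} (hx : x ∈ dyadicCube n J v) (hy : y ∈ dyadicCube n J w) :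
    (2 : ℝ) ^ (-J) * (‖intVec n v - intVec n w‖ - √n) ≤ ‖x - y‖ := by
  set D : ℝ := (2 : ℝ) ^ (-J)
  have hD : 0 < D := zpow_pos two_pos _
  -- coordinatewise, `x - y` differs from `D • (v - w)` by less than `D`
  have hoffset : ‖D • (intVec n v - intVec n w) - (x - y)‖ ≤ √n * D := by
    have := EuclideanSpace.norm_le_sqrt_card_mul (z := D • (intVec n v - intVec n w) - (x - y))
      hD.le fun i => ?_
    · simpa using this
    obtain ⟨hxl, hxu⟩ := hx i
    obtain ⟨hyl, hyu⟩ := hy i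
    simp only [PiLp.sub_apply, PiLp.smul_apply, intVec, smul_eq_mul]
    rw [abs_le]
    constructor <;> nlinarith
  have hnorm : ‖D • (intVec n v - intVec n w)‖ = D * ‖intVec n v - intVec n w‖ := by
    rw [norm_smul, Real.norm_of_nonneg hD.le]
  have := norm_sub_norm_le (D • (intVec n v - intVec n w)) (x - y)
  nlinarith

lemma measurableSet_dyadicCube (n : ℕ) (J : ℤ) (v : Fin n → ℤ) :
    MeasurableSet (dyadicCube n J v) := by
  have hcoord : ∀ i : Fin n, Measurable fun x : EuclideanSpace ℝ (Fin n) => x i :=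
    fun i => (EuclideanSpace.proj (𝕜 := ℝ) i).continuous.measurable
  simp only [dyadicCube, Set.ofPred_forall]
  exact .iInter fun i => (measurableSet_lt measurable_const (hcoord i)).inter
    (measurableSet_lt (hcoord i) measurable_const)

lemma EuclideanSpace.volume_setOf_apply_eq {ι : Type*} [Fintype ι] (i : ι) (c : ℝ) :
    volume {y : EuclideanSpace ℝ ι | y i = c} = 0 := by
  have hpi : volume {f : ι → ℝ | f i = c} = 0 := by
    rw [volume_pi]
    exact Measure.pi_hyperplane (fun _ : ι => (volume : Measure ℝ)) i c
  rwa [← (PiLp.volume_preserving_ofLp ι).measure_preimage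
    (measurableSet_eq_fun (measurable_pi_apply i) measurable_const).nullMeasurableSet] at hpi

lemma volume_compl_iUnion_dyadicCube (n : ℕ) (J : ℤ) :
    volume (⋃ w, dyadicCube n J w)ᶜ = 0 := by
  set D : ℝ := (2 : ℝ) ^ (-J)
  have hD : 0 < D := zpow_pos two_pos _
  -- a point off every grid hyperplane `{y i = D z}` lies in the cube indexed by `⌊y / D⌋`
  have hsub : (⋃ w, dyadicCube n J w)ᶜ ⊆ ⋃ (i : Fin n) (z : ℤ), {y | y i = D * z} := by
    intro y hy
    by_contra hgrid
    simp only [Set.mem_iUnion, Set.mem_ofPred_eq, not_exists] at hgrid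
    refine hy (Set.mem_iUnion.2 ⟨fun i => ⌊y i / D⌋, fun i => ⟨?_, ?_⟩⟩)
    · refine lt_of_le_of_ne ?_ fun h => hgrid i _ h.symm
      rw [mul_comm, ← le_div_iff₀ hD]
      exact Int.floor_le _
    · rw [mul_comm, ← div_lt_iff₀ hD]
      exact Int.lt_floor_add_one _
  exact measure_mono_null hsub <| measure_iUnion_null fun i => measure_iUnion_null fun z =>
    EuclideanSpace.volume_setOf_apply_eq i _

lemma rpow_neg_mul_div_pow_eq {n : ℕ} {N t a : ℝ} (ht : 0 < t) (ha : 0 < a) (j : ℕ) :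
    t ^ n * (a * 2 ^ j) ^ (-N) * (2 * (a * 2 ^ j) / t) ^ n
      = a ^ (-(N - n)) * 2 ^ n * ((2 : ℝ) ^ (-(N - n))) ^ j := by
  have hb : 0 < a * 2 ^ j := by positivity
  calc t ^ n * (a * 2 ^ j) ^ (-N) * (2 * (a * 2 ^ j) / t) ^ n
      = 2 ^ n * ((a * 2 ^ j) ^ (-N) * (a * 2 ^ j) ^ n) := by
        rw [div_pow, mul_pow]
        field_simp
    _ = 2 ^ n * (a * 2 ^ j) ^ (-(N - n)) := by
        rw [← Real.rpow_add_natCast hb.ne']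
        ring_nf
    _ = a ^ (-(N - n)) * 2 ^ n * ((2 : ℝ) ^ (-(N - n))) ^ j := by
        rw [Real.mul_rpow ha.le (by positivity), ← Real.rpow_pow_comm zero_le_two]
        ring

/-- `∑ⱼ 2ⁿ 2^{-j(N-n)}`, the total weight of the dyadic shells. -/
noncomputable def peetreConst (n : ℕ) (N : ℝ) : ℝ≥0∞ :=
  2 ^ n * (1 - ENNReal.ofReal (2 ^ (-(N - n))))⁻¹

lemma peetreConst_pos (n : ℕ) (N : ℝ) : 0 < peetreConst n N :=
  ENNReal.mul_pos (pow_ne_zero _ two_ne_zero)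
    (ENNReal.inv_ne_zero.2 (ENNReal.sub_ne_top ENNReal.one_ne_top))

lemma peetreConst_lt_top {n : ℕ} {N : ℝ} (hN : (n : ℝ) < N) : peetreConst n N < ∞ :=
  ENNReal.mul_lt_top (ENNReal.pow_lt_top ENNReal.ofNat_lt_top) <| ENNReal.inv_lt_top.2 <|
    tsub_pos_of_lt <| ENNReal.ofReal_lt_one.2 <|
      Real.rpow_lt_one_of_one_lt_of_neg one_lt_two (by linarith)

theorem lintegral_peetre_le {n : ℕ} {N : ℝ} (hN : (n : ℝ) < N) {t a : ℝ} (ht : 0 < t)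
    (ha : 0 < a) (h : EuclideanSpace ℝ (Fin n) → ℝ≥0∞) (x : EuclideanSpace ℝ (Fin n))
    (hh : ∀ y, 1 + t * ‖x - y‖ < a → h y = 0) :
    ∫⁻ y, ENNReal.ofReal (t ^ n * (1 + t * ‖x - y‖) ^ (-N)) * h y
      ≤ ENNReal.ofReal (a ^ (-(N - n))) * peetreConst n N *
          volume (ball (0 : EuclideanSpace ℝ (Fin n)) 1) * HLmax h x := by
  set u : EuclideanSpace ℝ (Fin n) → ℝ := fun y => 1 + t * ‖x - y‖
  have hu : Measurable u := by fun_prop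
  have hN0 : 0 ≤ N := n.cast_nonneg.trans hN.le
  set K : EuclideanSpace ℝ (Fin n) → ℝ≥0∞ := fun y =>
    ENNReal.ofReal (t ^ n * u y ^ (-N)) * h y
  set V := volume (ball (0 : EuclideanSpace ℝ (Fin n)) 1)
  set q : ℝ := 2 ^ (-(N - n))
  set S : ℕ → Set (EuclideanSpace ℝ (Fin n)) := fun j =>
    {y | a * 2 ^ j ≤ u y ∧ u y < a * 2 ^ (j + 1)}
  have hsupp : Function.support K ⊆ ⋃ j, S j := by
    intro y hy
    have hay : a ≤ u y := not_lt.1 fun hlt => hy (by simp [K, hh y hlt])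
    obtain ⟨j, hj⟩ := exists_nat_pow_near ((one_le_div ha).2 hay) one_lt_two
    exact Set.mem_iUnion.2 ⟨j, by rwa [le_div_iff₀' ha, div_lt_iff₀' ha] at hj⟩
  have hshell : ∀ j, ∫⁻ y in S j, K y
      ≤ ENNReal.ofReal (a ^ (-(N - n))) * 2 ^ n * ENNReal.ofReal q ^ j * V * HLmax h x := by
    intro j
    set b := a * 2 ^ j
    have hb : 0 < b := by positivity
    have hS : MeasurableSet (S j) :=
      (measurableSet_le measurable_const hu).inter (measurableSet_lt hu measurable_const)
    have hSball : S j ⊆ ball x (2 * b / t) := by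
      intro y hy
      have hy2 : 1 + t * ‖x - y‖ < a * 2 ^ (j + 1) := hy.2
      rw [pow_succ] at hy2
      rw [mem_ball, dist_comm, dist_eq_norm, lt_div_iff₀' ht]
      linarith
    have hkernel : ∀ y ∈ S j,
        ENNReal.ofReal (t ^ n * u y ^ (-N)) ≤ ENNReal.ofReal (t ^ n * b ^ (-N)) :=
      fun y hy => ENNReal.ofReal_le_ofReal <| mul_le_mul_of_nonneg_left
        (Real.rpow_le_rpow_of_nonpos hb hy.1 (neg_nonpos.2 hN0)) (by positivity)
    calc ∫⁻ y in S j, K y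
        ≤ ∫⁻ y in S j, ENNReal.ofReal (t ^ n * b ^ (-N)) * h y :=
          setLIntegral_mono' hS fun y hy => mul_le_mul_left (hkernel y hy) _
      _ = ENNReal.ofReal (t ^ n * b ^ (-N)) * ∫⁻ y in S j, h y :=
          lintegral_const_mul' _ _ ENNReal.ofReal_ne_top
      _ ≤ ENNReal.ofReal (t ^ n * b ^ (-N)) * (volume (ball x (2 * b / t)) * HLmax h x) := by
          gcongr
          exact (lintegral_mono_set hSball).trans
            (setLIntegral_ball_le_volume_mul_HLmax h x (by positivity))
      _ = ENNReal.ofReal (t ^ n * b ^ (-N) * (2 * b / t) ^ n) * V * HLmax h x := by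
          rw [Measure.addHaar_ball_of_pos volume x (by positivity), finrank_euclideanSpace_fin,
            ENNReal.ofReal_mul (p := t ^ n * b ^ (-N)) (by positivity)]
          ring
      _ = ENNReal.ofReal (a ^ (-(N - n))) * 2 ^ n * ENNReal.ofReal q ^ j * V * HLmax h x := by
          rw [rpow_neg_mul_div_pow_eq ht ha, ENNReal.ofReal_mul (by positivity),
            ENNReal.ofReal_mul (by positivity), ENNReal.ofReal_pow (by positivity),
            ENNReal.ofReal_pow (by positivity), ENNReal.ofReal_ofNat]
  calc ∫⁻ y, K y = ∫⁻ y in ⋃ j, S j, K y := (setLIntegral_eq_of_support_subset hsupp).symm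
    _ ≤ ∑' j, ∫⁻ y in S j, K y := lintegral_iUnion_le _ _
    _ ≤ ∑' j, ENNReal.ofReal (a ^ (-(N - n))) * 2 ^ n * ENNReal.ofReal q ^ j * V * HLmax h x :=
        ENNReal.tsum_le_tsum hshell
    _ = _ := by
        rw [ENNReal.tsum_mul_right, ENNReal.tsum_mul_right, ENNReal.tsum_mul_left,
          ENNReal.tsum_geometric, peetreConst]
        ring

lemma rpow_neg_le_mul_rpow_neg {ε c A B : ℝ} (hε : 0 ≤ ε) (hc : 0 < c) (hB : 0 < B)
    (hBA : B ≤ c * A) : A ^ (-ε) ≤ c ^ ε * B ^ (-ε) := by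
  have hA : 0 < A := pos_of_mul_pos_right (hB.trans_le hBA) hc.le
  calc A ^ (-ε) = c ^ ε * (c * A) ^ (-ε) := by
        rw [Real.mul_rpow hc.le hA.le, Real.rpow_neg hc.le, ← mul_assoc,
          mul_inv_cancel₀ (Real.rpow_pos_of_pos hc _).ne', one_mul]
    _ ≤ c ^ ε * B ^ (-ε) :=
        mul_le_mul_of_nonneg_left (Real.rpow_le_rpow_of_nonpos hB hBA (by linarith))
          (Real.rpow_nonneg hc.le _)

theorem lintegral_peetre_indicator_dyadicCube_le {n : ℕ} {N : ℝ} (hN : (n : ℝ) < N)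
    {J k : ℤ} (hJk : J ≤ k) {v : Fin n → ℤ} {x : EuclideanSpace ℝ (Fin n)}
    (hx : x ∈ dyadicCube n J v) (w : Fin n → ℤ) (g : EuclideanSpace ℝ (Fin n) → ℝ≥0∞) :
    ∫⁻ y, ENNReal.ofReal ((2 : ℝ) ^ ((k : ℝ) * n) *
        (1 + (2 : ℝ) ^ (k : ℝ) * ‖x - y‖) ^ (-N)) * (dyadicCube n J w).indicator g y
      ≤ ENNReal.ofReal ((1 + √n) ^ (N - n)) * peetreConst n N *
          volume (ball (0 : EuclideanSpace ℝ (Fin n)) 1) *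
          (ENNReal.ofReal ((1 + ‖intVec n v - intVec n w‖) ^ (-(N - n))) *
            HLmax ((dyadicCube n J w).indicator g) x) := by
  set m := ‖intVec n v - intVec n w‖
  set A := max 1 (1 + m - √n)
  have h2k : 0 < (2 : ℝ) ^ (k : ℝ) := Real.rpow_pos_of_pos two_pos _
  have hsupp : ∀ y, 1 + (2 : ℝ) ^ (k : ℝ) * ‖x - y‖ < A →
      (dyadicCube n J w).indicator g y = 0 := by
    intro y hy
    refine Set.indicator_of_notMem (fun hyQ => hy.not_ge ?_) g
    have hsep := le_norm_sub_of_mem_dyadicCube hx hyQ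
    have hscale : 1 ≤ (2 : ℝ) ^ (k : ℝ) * 2 ^ (-J) := by
      rw [Real.rpow_intCast, ← zpow_add₀ two_ne_zero]
      exact one_le_zpow₀ one_le_two (by omega)
    have hnorm : 0 ≤ (2 : ℝ) ^ (k : ℝ) * ‖x - y‖ := by positivity
    refine max_le (by linarith) ?_
    rcases le_or_gt (m - √n) 0 with hclose | hfar
    · linarith
    · nlinarith [mul_le_mul_of_nonneg_left hsep h2k.le]
  have hA : 1 + m ≤ (1 + √n) * A := by
    nlinarith [le_max_left 1 (1 + m - √n), le_max_right 1 (1 + m - √n), Real.sqrt_nonneg n]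
  have hdecay : A ^ (-(N - n)) ≤ (1 + √n) ^ (N - n) * (1 + m) ^ (-(N - n)) :=
    rpow_neg_le_mul_rpow_neg (by linarith) (by positivity) (by positivity) hA
  calc _ = ∫⁻ y, ENNReal.ofReal (((2 : ℝ) ^ (k : ℝ)) ^ n *
          (1 + (2 : ℝ) ^ (k : ℝ) * ‖x - y‖) ^ (-N)) * (dyadicCube n J w).indicator g y := by
        rw [Real.rpow_mul zero_le_two, Real.rpow_natCast]
    _ ≤ ENNReal.ofReal (A ^ (-(N - n))) * peetreConst n N *
          volume (ball (0 : EuclideanSpace ℝ (Fin n)) 1) *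
          HLmax ((dyadicCube n J w).indicator g) x :=
        lintegral_peetre_le hN h2k (by positivity) _ x hsupp
    _ ≤ _ := by
        grw [ENNReal.ofReal_le_ofReal hdecay, ENNReal.ofReal_mul (by positivity)]
        exact le_of_eq (by ring)

/-- **Localized Peetre-kernel estimate.** Let `N > n`. There is `C = C(N) > 0` such that for
every `g`, `J ∈ ℤ`, `v ∈ ℤⁿ`, every integer `k ≥ J` and every `x ∈ Q_{J,v}`,
`∫ 2^{kn}|g(y)|(1+2^k|x−y|)^{−N} dy ≤ C Σ_w (1+|v−w|)^{−(N−n)} M(𝟙_{Q_{J,w}} g)(x)`. -/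
theorem stmt6 (n : ℕ) (N : ℝ) (hN : (n : ℝ) < N) :
    ∃ C : ℝ≥0∞, 0 < C ∧ C < ∞ ∧
      ∀ g : EuclideanSpace ℝ (Fin n) → ℝ≥0∞, Measurable g →
        ∀ (J k : ℤ), J ≤ k → ∀ (v : Fin n → ℤ), ∀ x ∈ dyadicCube n J v,
          (∫⁻ y, ENNReal.ofReal
                ((2 : ℝ) ^ ((k : ℝ) * (n : ℝ)) * (1 + (2 : ℝ) ^ (k : ℝ) * ‖x - y‖) ^ (-N)) * g y)
            ≤ C * ∑' w : Fin n → ℤ,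
                ENNReal.ofReal ((1 + ‖intVec n v - intVec n w‖) ^ (-(N - (n : ℝ)))) *
                  HLmax ((dyadicCube n J w).indicator g) x := by
  set V := volume (ball (0 : EuclideanSpace ℝ (Fin n)) 1)
  refine ⟨ENNReal.ofReal ((1 + √n) ^ (N - n)) * peetreConst n N * V, ?_, ?_, ?_⟩
  · have hfactor : 0 < ENNReal.ofReal ((1 + √n) ^ (N - n)) :=
      ENNReal.ofReal_pos.2 (Real.rpow_pos_of_pos (by positivity) _)
    exact ENNReal.mul_pos (ENNReal.mul_pos hfactor.ne' (peetreConst_pos n N).ne').ne'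
      (measure_ball_pos volume _ one_pos).ne'
  · exact ENNReal.mul_lt_top
      (ENNReal.mul_lt_top ENNReal.ofReal_lt_top (peetreConst_lt_top hN)) measure_ball_lt_top
  intro g _ J k hJk v x hx
  set K : EuclideanSpace ℝ (Fin n) → ℝ≥0∞ := fun y =>
    ENNReal.ofReal ((2 : ℝ) ^ ((k : ℝ) * n) * (1 + (2 : ℝ) ^ (k : ℝ) * ‖x - y‖) ^ (-N))
  calc ∫⁻ y, K y * g y = ∫⁻ y in ⋃ w, dyadicCube n J w, K y * g y := by
        rw [Measure.restrict_congr_set (ae_eq_univ.2 (volume_compl_iUnion_dyadicCube n J)),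
          Measure.restrict_univ]
    _ ≤ ∑' w, ∫⁻ y in dyadicCube n J w, K y * g y := lintegral_iUnion_le _ _
    _ = ∑' w, ∫⁻ y, K y * (dyadicCube n J w).indicator g y := by
        simp_rw [← lintegral_indicator (measurableSet_dyadicCube n J _), Set.indicator_mul_right]
    _ ≤ _ := by
        rw [← ENNReal.tsum_mul_left]
        exact ENNReal.tsum_le_tsum fun w =>
          lintegral_peetre_indicator_dyadicCube_le hN hJk hx w g
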